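/- arXiv:2509.02857 — 5 statements merged into one kernel-verified Lean document; each statement's English description precedes it below -/
import Mathlib

section
/- Let ω > 0, let z ∈ ℝ with z < ω, and let x ∈ ℝ², x ≠ 0. Define K_{ω,z}(x) := (ω/(4π)) · ∫₀^∞ exp(t·z − (ω/4)·coth(ω t)·‖x‖²) / sinh(ω t) dt (this integral converges). Then π·(1 − z/ω)·K_{ω,z}(x)·exp((ω/4)‖x‖²) ≤ exp(max(z,0)/ω) · ( (1 − z/ω)/(ω‖x‖²) + 1/(2(e − e⁻¹)) ). -/
/-!
Multiplying by `exp (ω ‖x‖² / 4)` replaces `coth (ω t)` by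
`coth (ω t) - 1 = exp (-ω t) / sinh (ω t)` in the exponent. Split the `t`-integral at `t = 1 / ω`. For `s = ω t ≤ 1`, writing
`v = coth s - 1`, the integrand is `exp (t z) * exp s * (v * exp (-a v))` with `a = ω ‖x‖² / 4`,
and `y * exp (-y) ≤ exp (-1)` bounds it by `exp (max z 0 / ω) / a`; the interval has length `1 / ω`.
For `s ≥ 1` we drop `exp (-a v) ≤ 1` and use `sinh s ≥ exp (s - 1) * sinh 1`, so the integrand is
at most `exp 1 / sinh 1 * exp ((z - ω) t)`, whose integral over `(1 / ω, ∞)` is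
`exp (z / ω) / ((ω - z) sinh 1)`. The prefactor `π (1 - z / ω) ω / (4π) = (ω - z) / 4` and
`4 sinh 1 = 2 (e - e⁻¹)` give the stated constants.
-/

open MeasureTheory

noncomputable section

/-- The hyperbolic cotangent. -/
def coth (t : ℝ) : ℝ := Real.cosh t / Real.sinh t

/-- The resolvent kernel of the 2D isotropic harmonic oscillator `P² + (ω²/4)X²`
at spectral parameter `z`, evaluated at `x` (pole at the origin), obtained from
the Mehler heat kernel by a Laplace transform. -/
def Kker (ω z : ℝ) (x : EuclideanSpace ℝ (Fin 2)) : ℝ :=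
  (ω / (4 * Real.pi)) *
    ∫ t in Set.Ioi (0 : ℝ),
      Real.exp (t * z - (ω / 4) * coth (ω * t) * ‖x‖ ^ 2) / Real.sinh (ω * t)

open Set Real

lemma coth_sub_one {s : ℝ} (hs : s ≠ 0) : coth s - 1 = exp (-s) / sinh s := by
  rw [coth, div_sub_one (sinh_ne_zero.mpr hs), cosh_sub_sinh]

lemma exp_neg_mul_coth_sub_one_div_sinh_le {a s : ℝ} (ha : 0 < a) (hs : s ≠ 0) :
    exp (-(a * (coth s - 1))) / sinh s ≤ exp (s - 1) / a := by
  set v := coth s - 1 with hv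
  have hsinh : (sinh s)⁻¹ = exp s * v := by
    rw [hv, coth_sub_one hs, mul_div_assoc', ← exp_add, add_neg_cancel, exp_zero, one_div]
  calc exp (-(a * v)) / sinh s = exp s * (a * v * exp (-(a * v))) / a := by
        rw [div_eq_mul_inv, hsinh]; field_simp
    _ ≤ exp s * exp (-1) / a := by
        gcongr; exact mul_exp_neg_le_exp_neg_one _
    _ = exp (s - 1) / a := by rw [← exp_add, sub_eq_add_neg]

lemma Real.exp_sub_one_mul_sinh_one_le_sinh {s : ℝ} (hs : 1 ≤ s) :
    exp (s - 1) * sinh 1 ≤ sinh s := by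
  have hexp : exp (-s) ≤ exp (s - 1) * exp (-1) := by
    rw [← exp_add]; exact exp_le_exp.mpr (by linarith)
  have hs1 : exp (s - 1) * exp 1 = exp s := by rw [← exp_add, sub_add_cancel]
  rw [sinh_eq, sinh_eq]
  linarith

lemma MeasureTheory.integrableOn_of_nonneg_of_le {α : Type*} [MeasurableSpace α] {μ : Measure α}
    {f g : α → ℝ} {s : Set α} (hs : MeasurableSet s) (hf : AEStronglyMeasurable f (μ.restrict s))
    (hg : IntegrableOn g s μ) (hf0 : ∀ t ∈ s, 0 ≤ f t) (hfg : ∀ t ∈ s, f t ≤ g t) :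
    IntegrableOn f s μ := by
  refine hg.mono' hf ?_
  filter_upwards [ae_restrict_mem hs] with t ht
  rw [norm_of_nonneg (hf0 t ht)]
  exact hfg t ht

namespace Kker

def integrand (ω z a t : ℝ) : ℝ := exp (t * z - a * (coth (ω * t) - 1)) / sinh (ω * t)

variable {ω z a : ℝ}

lemma measurable_integrand : Measurable (integrand ω z a) := by
  unfold integrand coth; fun_prop

lemma integrand_nonneg (hω : 0 < ω) {t : ℝ} (ht : 0 < t) : 0 ≤ integrand ω z a t := by
  have hsinh : 0 < sinh (ω * t) := sinh_pos_iff.mpr (mul_pos hω ht)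
  unfold integrand; positivity

lemma integrand_eq_exp_mul (t : ℝ) :
    integrand ω z a t = exp (t * z) * (exp (-(a * (coth (ω * t) - 1))) / sinh (ω * t)) := by
  rw [integrand, mul_div_assoc', ← exp_add, sub_eq_add_neg]

lemma integrand_le_of_le_inv (hω : 0 < ω) (ha : 0 < a) {t : ℝ} (ht : 0 < t) (htω : t ≤ ω⁻¹) :
    integrand ω z a t ≤ exp (max z 0 / ω) / a := by
  have hωt : ω * t ≤ 1 := by
    simpa [hω.ne'] using mul_le_mul_of_nonneg_left htω hω.le
  have hz : t * z ≤ max z 0 / ω := by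
    rw [div_eq_mul_inv]
    calc t * z ≤ t * max z 0 := by gcongr; exact le_max_left z 0
      _ ≤ ω⁻¹ * max z 0 := by gcongr
      _ = max z 0 * ω⁻¹ := mul_comm _ _
  have hsinh : 0 < sinh (ω * t) := sinh_pos_iff.mpr (mul_pos hω ht)
  calc integrand ω z a t
      = exp (t * z) * (exp (-(a * (coth (ω * t) - 1))) / sinh (ω * t)) := integrand_eq_exp_mul t
    _ ≤ exp (max z 0 / ω) * (exp (ω * t - 1) / a) :=
        mul_le_mul (exp_le_exp.mpr hz)
          (exp_neg_mul_coth_sub_one_div_sinh_le ha (mul_pos hω ht).ne') (by positivity)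
          (by positivity)
    _ ≤ exp (max z 0 / ω) * (1 / a) := by
        gcongr; exact exp_le_one_iff.mpr (by linarith)
    _ = exp (max z 0 / ω) / a := mul_one_div _ _

lemma integrand_le_of_inv_le (hω : 0 < ω) (ha : 0 ≤ a) {t : ℝ} (htω : ω⁻¹ ≤ t) :
    integrand ω z a t ≤ exp 1 / sinh 1 * exp ((z - ω) * t) := by
  have hωt : 1 ≤ ω * t := by
    simpa [hω.ne'] using mul_le_mul_of_nonneg_left htω hω.le
  have hcoth : 0 ≤ coth (ω * t) - 1 := by
    have hsinh : 0 < sinh (ω * t) := sinh_pos_iff.mpr (by linarith)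
    rw [coth_sub_one (by linarith)]; positivity
  have hsinh1 : 0 < sinh 1 := sinh_pos_iff.mpr one_pos
  calc integrand ω z a t
      = exp (t * z) * (exp (-(a * (coth (ω * t) - 1))) / sinh (ω * t)) := integrand_eq_exp_mul t
    _ ≤ exp (t * z) * (1 / (exp (ω * t - 1) * sinh 1)) := by
        gcongr
        · exact exp_le_one_iff.mpr (by nlinarith)
        · exact exp_sub_one_mul_sinh_one_le_sinh hωt
    _ = exp 1 / sinh 1 * exp ((z - ω) * t) := by
        rw [show t * z = (z - ω) * t + (ω * t - 1) + 1 by ring, exp_add, exp_add]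
        field_simp

lemma integrableOn_integrand_Ioc (hω : 0 < ω) (ha : 0 < a) :
    IntegrableOn (integrand ω z a) (Ioc 0 ω⁻¹) :=
  integrableOn_of_nonneg_of_le measurableSet_Ioc measurable_integrand.aestronglyMeasurable
    (integrableOn_const measure_Ioc_lt_top.ne) (fun _ ht => integrand_nonneg hω ht.1)
    (fun _ ht => integrand_le_of_le_inv hω ha ht.1 ht.2)

lemma integrableOn_integrand_Ioi (hω : 0 < ω) (hz : z < ω) (ha : 0 ≤ a) :
    IntegrableOn (integrand ω z a) (Ioi ω⁻¹) :=
  integrableOn_of_nonneg_of_le measurableSet_Ioi measurable_integrand.aestronglyMeasurable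
    ((integrableOn_exp_mul_Ioi (sub_neg.mpr hz) _).const_mul _)
    (fun _ ht => integrand_nonneg hω ((inv_pos.mpr hω).trans ht))
    (fun _ ht => integrand_le_of_inv_le hω ha (le_of_lt ht))

lemma setIntegral_integrand_Ioc_le (hω : 0 < ω) (ha : 0 < a) :
    ∫ t in Ioc 0 ω⁻¹, integrand ω z a t ≤ exp (max z 0 / ω) / (a * ω) := by
  calc ∫ t in Ioc 0 ω⁻¹, integrand ω z a t ≤ ∫ _ in Ioc 0 ω⁻¹, exp (max z 0 / ω) / a :=
        setIntegral_mono_on (integrableOn_integrand_Ioc hω ha)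
          (integrableOn_const measure_Ioc_lt_top.ne) measurableSet_Ioc
          (fun _ ht => integrand_le_of_le_inv hω ha ht.1 ht.2)
    _ = exp (max z 0 / ω) / (a * ω) := by
        rw [setIntegral_const, volume_real_Ioc_of_le (inv_pos.mpr hω).le, sub_zero, smul_eq_mul]
        field_simp

lemma setIntegral_integrand_Ioi_le (hω : 0 < ω) (hz : z < ω) (ha : 0 ≤ a) :
    ∫ t in Ioi ω⁻¹, integrand ω z a t ≤ exp (z / ω) / ((ω - z) * sinh 1) := by
  calc ∫ t in Ioi ω⁻¹, integrand ω z a t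
      ≤ ∫ t in Ioi ω⁻¹, exp 1 / sinh 1 * exp ((z - ω) * t) :=
        setIntegral_mono_on (integrableOn_integrand_Ioi hω hz ha)
          ((integrableOn_exp_mul_Ioi (sub_neg.mpr hz) _).const_mul _) measurableSet_Ioi
          (fun _ ht => integrand_le_of_inv_le hω ha (le_of_lt ht))
    _ = exp (z / ω) / ((ω - z) * sinh 1) := by
        rw [integral_const_mul, integral_exp_mul_Ioi (sub_neg.mpr hz),
          show z / ω = 1 + (z - ω) * ω⁻¹ by field_simp; ring, exp_add,
          neg_div, ← div_neg, neg_sub, mul_comm (ω - z), ← div_div]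
        ring

lemma integral_integrand_le (hω : 0 < ω) (hz : z < ω) (ha : 0 < a) :
    ∫ t in Ioi 0, integrand ω z a t
      ≤ exp (max z 0 / ω) * (1 / (a * ω) + 1 / ((ω - z) * sinh 1)) := by
  have hmax : exp (z / ω) ≤ exp (max z 0 / ω) := by gcongr; exact le_max_left z 0
  have hsinh1 : 0 < sinh 1 := sinh_pos_iff.mpr one_pos
  rw [← Ioc_union_Ioi_eq_Ioi (inv_pos.mpr hω).le, setIntegral_union (Ioc_disjoint_Ioi le_rfl)
    measurableSet_Ioi (integrableOn_integrand_Ioc hω ha) (integrableOn_integrand_Ioi hω hz ha.le),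
    mul_add, mul_one_div, mul_one_div]
  refine add_le_add (setIntegral_integrand_Ioc_le hω ha)
    ((setIntegral_integrand_Ioi_le hω hz ha.le).trans ?_)
  have : 0 < ω - z := sub_pos.mpr hz
  gcongr

lemma mul_exp_eq (ω z : ℝ) (x : EuclideanSpace ℝ (Fin 2)) :
    Kker ω z x * exp (ω / 4 * ‖x‖ ^ 2)
      = ω / (4 * π) * ∫ t in Ioi 0, integrand ω z (ω / 4 * ‖x‖ ^ 2) t := by
  rw [Kker, mul_assoc, ← integral_mul_const]
  congr 2 with t
  rw [integrand, div_mul_eq_mul_div, ← exp_add]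
  congr 2
  ring

end Kker

/-- Upper bound for the oscillator resolvent kernel. -/
theorem stmt_0 (ω z : ℝ) (hω : 0 < ω) (hz : z < ω)
    (x : EuclideanSpace ℝ (Fin 2)) (hx : x ≠ 0) :
    Real.pi * (1 - z / ω) * Kker ω z x * Real.exp ((ω / 4) * ‖x‖ ^ 2)
      ≤ Real.exp (max z 0 / ω) *
        ((1 - z / ω) / (ω * ‖x‖ ^ 2) + 1 / (2 * (Real.exp 1 - (Real.exp 1)⁻¹))) := by
  have hx0 : 0 < ‖x‖ := norm_pos_iff.mpr hx
  have hsinh : 2 * (exp 1 - (exp 1)⁻¹) = 4 * sinh 1 := by rw [sinh_eq, exp_neg]; ring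
  calc π * (1 - z / ω) * Kker ω z x * exp (ω / 4 * ‖x‖ ^ 2)
      = (ω - z) / 4 * ∫ t in Ioi 0, Kker.integrand ω z (ω / 4 * ‖x‖ ^ 2) t := by
        rw [mul_assoc, Kker.mul_exp_eq]
        field_simp
    _ ≤ (ω - z) / 4 * (exp (max z 0 / ω) *
          (1 / (ω / 4 * ‖x‖ ^ 2 * ω) + 1 / ((ω - z) * sinh 1))) := by
        gcongr
        exact Kker.integral_integrand_le hω hz (by positivity)
    _ = exp (max z 0 / ω) * ((1 - z / ω) / (ω * ‖x‖ ^ 2) + 1 / (2 * (exp 1 - (exp 1)⁻¹))) := by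
        have : ω - z ≠ 0 := by linarith
        rw [hsinh]
        field_simp

end
end

section
/- Let ω > 0, let z ∈ ℝ with z < ω, and let x ∈ ℝ², x ≠ 0. Define K_{ω,z}(x) := (ω/(4π)) · ∫₀^∞ exp(t·z − (ω/4)·coth(ω t)·‖x‖²) / sinh(ω t) dt. Then (1/(2e)) · (1 + (ω/2)‖x‖²)^{−(1/2)(1 − z/ω)} ≤ π·(1 − z/ω)·K_{ω,z}(x)·exp((ω/4)‖x‖²). -/
open MeasureTheory

noncomputable section

/-!
Write `a = (ω/4)‖x‖²` and `y = coth (ω t)`. Since `1 / sinh s = e^{-s} (1 + coth s)`, the integrand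
equals `e^{-(ω-z) t} (1 + y) e^{-a y}`. Beyond the time `T` with `e^{2ωT} = 1 + 2a` one has
`a (y - 1) = 2a / (e^{2ωt} - 1) ≤ 1`, so the integrand is at least `2 e^{-1-a} e^{-(ω-z) t}`;
integrating over `(T, ∞)` gives `2 e^{-1-a} e^{-(ω-z) T} / (ω - z)`, and
`e^{-(ω-z) T} = (1 + 2a)^{-(1 - z/ω)/2}`. Integrability comes from `(1 + y) e^{-a y} ≤ 2 / a`.
-/

open Real Set

lemma one_lt_coth {s : ℝ} (hs : 0 < s) : 1 < coth s := by
  rw [coth, one_lt_div (sinh_pos_iff.mpr hs)]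
  exact sinh_lt_cosh s

lemma coth_sub_one_eq {s : ℝ} (hs : 0 < s) : coth s - 1 = exp (-s) / sinh s := by
  rw [coth, ← cosh_sub_sinh, sub_div, div_self (sinh_pos_iff.mpr hs).ne']

lemma inv_sinh_eq {s : ℝ} (hs : 0 < s) : (sinh s)⁻¹ = exp (-s) * (1 + coth s) := by
  have h : 1 + coth s = exp s / sinh s := by
    rw [coth, ← sinh_add_cosh, add_div, div_self (sinh_pos_iff.mpr hs).ne']
  rw [h, mul_div_assoc', ← exp_add, neg_add_cancel, exp_zero, one_div]

lemma mul_coth_sub_one_le_one {a s : ℝ} (hs : 0 < s) (h : 1 + 2 * a ≤ exp (2 * s)) :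
    a * (coth s - 1) ≤ 1 := by
  rw [coth_sub_one_eq hs, mul_div_assoc', div_le_one (sinh_pos_iff.mpr hs), sinh_eq]
  have : (1 + 2 * a) * exp (-s) ≤ exp s :=
    calc (1 + 2 * a) * exp (-s) ≤ exp (2 * s) * exp (-s) := by gcongr
      _ = exp s := by rw [← exp_add]; ring_nf
  linarith

lemma one_add_mul_exp_neg_mul_le {a y : ℝ} (ha : 0 < a) (hy : 1 ≤ y) :
    (1 + y) * exp (-(a * y)) ≤ 2 / a := by
  have h : (1 + y) * a ≤ 2 * exp (a * y) := by nlinarith [add_one_le_exp (a * y)]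
  rw [le_div_iff₀ ha]
  calc (1 + y) * exp (-(a * y)) * a = (1 + y) * a * exp (-(a * y)) := by ring
    _ ≤ 2 * exp (a * y) * exp (-(a * y)) := by gcongr
    _ = 2 := by rw [mul_assoc, ← exp_add, add_neg_cancel, exp_zero, mul_one]

lemma two_mul_exp_neg_one_sub_le {a y : ℝ} (hy : 1 ≤ y) (h : a * (y - 1) ≤ 1) :
    2 * exp (-1 - a) ≤ (1 + y) * exp (-(a * y)) :=
  mul_le_mul (by linarith) (exp_le_exp.mpr (by linarith)) (exp_pos _).le (by linarith)

lemma exp_sub_mul_coth_div_sinh_eq {ω z a t : ℝ} (hs : 0 < ω * t) :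
    exp (t * z - a * coth (ω * t)) / sinh (ω * t)
      = exp ((z - ω) * t) * ((1 + coth (ω * t)) * exp (-(a * coth (ω * t)))) := by
  have h : exp (t * z - a * coth (ω * t)) * exp (-(ω * t))
      = exp ((z - ω) * t) * exp (-(a * coth (ω * t))) := by
    rw [← exp_add, ← exp_add]; ring_nf
  rw [div_eq_mul_inv, inv_sinh_eq hs]
  linear_combination (1 + coth (ω * t)) * h

lemma integrableOn_exp_sub_mul_coth_div_sinh {ω z a : ℝ} (hω : 0 < ω) (hz : z < ω)
    (ha : 0 < a) :
    IntegrableOn (fun t ↦ exp (t * z - a * coth (ω * t)) / sinh (ω * t)) (Ioi 0) := by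
  refine ((integrableOn_exp_mul_Ioi (sub_neg.mpr hz) 0).const_mul (2 / a)).mono' ?_ ?_
  · exact Measurable.aestronglyMeasurable (by unfold coth; fun_prop)
  · filter_upwards [ae_restrict_mem measurableSet_Ioi] with t ht
    have hs : 0 < ω * t := mul_pos hω ht
    rw [norm_of_nonneg (div_nonneg (exp_pos _).le (sinh_pos_iff.mpr hs).le),
      exp_sub_mul_coth_div_sinh_eq hs, mul_comm (2 / a)]
    exact mul_le_mul_of_nonneg_left
      (one_add_mul_exp_neg_mul_le ha (one_lt_coth hs).le) (exp_pos _).le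

lemma le_integral_exp_sub_mul_coth_div_sinh {ω z a : ℝ} (hω : 0 < ω) (hz : z < ω)
    (ha : 0 < a) :
    2 * exp (-1 - a) * (1 + 2 * a) ^ (-(1 / 2 : ℝ) * (1 - z / ω)) / (ω - z)
      ≤ ∫ t in Ioi 0, exp (t * z - a * coth (ω * t)) / sinh (ω * t) := by
  set T := log (1 + 2 * a) / (2 * ω)
  have hT : 0 ≤ T := div_nonneg (log_nonneg (by linarith)) (by positivity)
  have hdecay : exp ((z - ω) * T) = (1 + 2 * a) ^ (-(1 / 2 : ℝ) * (1 - z / ω)) := by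
    rw [rpow_def_of_pos (by linarith)]
    congr 1
    simp only [T]
    field_simp
    ring
  have hint := integrableOn_exp_sub_mul_coth_div_sinh hω hz ha
  calc 2 * exp (-1 - a) * (1 + 2 * a) ^ (-(1 / 2 : ℝ) * (1 - z / ω)) / (ω - z)
      = ∫ t in Ioi T, 2 * exp (-1 - a) * exp ((z - ω) * t) := by
        rw [integral_const_mul, integral_exp_mul_Ioi (sub_neg.mpr hz), hdecay,
          ← neg_sub ω z, div_neg, neg_div, neg_neg, mul_div_assoc]
    _ ≤ ∫ t in Ioi T, exp (t * z - a * coth (ω * t)) / sinh (ω * t) := by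
        refine setIntegral_mono_on ((integrableOn_exp_mul_Ioi (sub_neg.mpr hz) T).const_mul _)
          (hint.mono_set (Ioi_subset_Ioi hT)) measurableSet_Ioi fun t ht ↦ ?_
        have hs : 0 < ω * t := mul_pos hω (hT.trans_lt ht)
        have hlog : log (1 + 2 * a) < 2 * (ω * t) := by
          have := (div_lt_iff₀ (by positivity : (0 : ℝ) < 2 * ω)).mp ht
          linarith
        have hcoth := one_lt_coth hs
        rw [exp_sub_mul_coth_div_sinh_eq hs, mul_comm _ (exp _)]
        refine mul_le_mul_of_nonneg_left (two_mul_exp_neg_one_sub_le hcoth.le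
          (mul_coth_sub_one_le_one hs ?_)) (exp_pos _).le
        exact (exp_log (by linarith)).symm.le.trans (exp_le_exp.mpr hlog.le)
    _ ≤ ∫ t in Ioi 0, exp (t * z - a * coth (ω * t)) / sinh (ω * t) := by
        refine setIntegral_mono_set hint ?_ (Ioi_subset_Ioi hT).eventuallyLE
        filter_upwards [ae_restrict_mem measurableSet_Ioi] with t ht
        exact div_nonneg (exp_pos _).le (sinh_pos_iff.mpr (mul_pos hω ht)).le

/-- Lower bound for the oscillator resolvent kernel. -/
theorem stmt_1 (ω z : ℝ) (hω : 0 < ω) (hz : z < ω)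
    (x : EuclideanSpace ℝ (Fin 2)) (hx : x ≠ 0) :
    (1 / (2 * Real.exp 1)) *
        (1 + (ω / 2) * ‖x‖ ^ 2) ^ (-(1 / 2 : ℝ) * (1 - z / ω))
      ≤ Real.pi * (1 - z / ω) * Kker ω z x * Real.exp ((ω / 4) * ‖x‖ ^ 2) := by
  set a := ω / 4 * ‖x‖ ^ 2
  have ha : 0 < a := by have := norm_pos_iff.mpr hx; positivity
  have hK : Kker ω z x
      = ω / (4 * π) * ∫ t in Ioi 0, exp (t * z - a * coth (ω * t)) / sinh (ω * t) := by
    simp only [Kker, a, mul_right_comm _ (coth _)]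
  have hb : ω / 2 * ‖x‖ ^ 2 = 2 * a := by ring
  have hν : 0 < 1 - z / ω := sub_pos.mpr ((div_lt_one hω).mpr hz)
  have hωz : ω - z ≠ 0 := (sub_pos.mpr hz).ne'
  rw [hK, hb]
  calc 1 / (2 * exp 1) * (1 + 2 * a) ^ (-(1 / 2 : ℝ) * (1 - z / ω))
      = (π * (1 - z / ω) * (ω / (4 * π)) * exp a)
          * (2 * exp (-1 - a) * (1 + 2 * a) ^ (-(1 / 2 : ℝ) * (1 - z / ω)) / (ω - z)) := by
        rw [exp_sub, exp_neg]
        field_simp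
        ring
    _ ≤ (π * (1 - z / ω) * (ω / (4 * π)) * exp a)
          * ∫ t in Ioi 0, exp (t * z - a * coth (ω * t)) / sinh (ω * t) := by
        gcongr
        exact le_integral_exp_sub_mul_coth_div_sinh hω hz ha
    _ = _ := by ring

end
end

section
/- For every A > 0 and every b ∈ ℝ, one has ∫₀¹ exp(−A·coth(s) + b·s) / sinh(s) ds ≤ exp(max(b,0)) · exp(−A)/A. -/
/-!
On `(0, 1)` we have `coth s ≥ 1/s`, `sinh s ≥ s ≥ s²` and `b s ≤ max b 0`, so the integrand is at
most `exp (max b 0) · exp (-A/s) / s²`, and the substitution `u = A/s` turns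
`∫₀¹ (A/s²) exp (-A/s) ds` into `∫_A^∞ e^{-u} du = e^{-A}`.
-/

open MeasureTheory

noncomputable section

open Set

lemma Real.sinh_le_mul_cosh {x : ℝ} (hx : 0 ≤ x) : Real.sinh x ≤ x * Real.cosh x := by
  have hderiv (t : ℝ) :
      HasDerivAt (fun t ↦ t * Real.cosh t - Real.sinh t) (t * Real.sinh t) t := by
    refine (((hasDerivAt_id' t).mul (Real.hasDerivAt_cosh t)).sub
      (Real.hasDerivAt_sinh t)).congr_deriv ?_
    ring
  have hmono : MonotoneOn (fun t ↦ t * Real.cosh t - Real.sinh t) (Ici 0) := by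
    refine monotoneOn_of_deriv_nonneg (convex_Ici 0)
      (fun t _ ↦ (hderiv t).continuousAt.continuousWithinAt)
      (fun t _ ↦ (hderiv t).differentiableAt.differentiableWithinAt) fun t ht ↦ ?_
    rw [interior_Ici] at ht
    rw [(hderiv t).deriv]
    exact mul_nonneg (le_of_lt ht) (Real.sinh_nonneg_iff.mpr (le_of_lt ht))
  simpa using hmono self_mem_Ici hx hx

lemma inv_le_coth {x : ℝ} (hx : 0 < x) : x⁻¹ ≤ coth x := by
  rw [coth, inv_eq_one_div, div_le_div_iff₀ hx (Real.sinh_pos_iff.mpr hx), one_mul, mul_comm]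
  exact Real.sinh_le_mul_cosh hx.le

lemma exp_neg_mul_coth_add_mul_div_sinh_le {A b s : ℝ} (hA : 0 ≤ A) (hs : s ∈ Ioc 0 1) :
    Real.exp (-A * coth s + b * s) / Real.sinh s ≤
      Real.exp (max b 0) * Real.exp (-(A / s)) / s ^ 2 := by
  obtain ⟨hs0, hs1⟩ := hs
  have hcoth : -A * coth s ≤ -(A / s) := by
    have := mul_le_mul_of_nonneg_left (inv_le_coth hs0) hA
    rw [← div_eq_mul_inv] at this
    linarith
  have hlin : b * s ≤ max b 0 := by
    rcases le_total b 0 with hb | hb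
    · nlinarith [le_max_right b 0]
    · nlinarith [le_max_left b 0]
  have hexp : Real.exp (-A * coth s + b * s) ≤ Real.exp (max b 0) * Real.exp (-(A / s)) := by
    rw [← Real.exp_add]
    exact Real.exp_le_exp.mpr (by linarith)
  have hsinh : s ^ 2 ≤ Real.sinh s :=
    (by nlinarith : s ^ 2 ≤ s).trans (Real.self_le_sinh_iff.mpr hs0.le)
  calc Real.exp (-A * coth s + b * s) / Real.sinh s
      ≤ Real.exp (-A * coth s + b * s) / s ^ 2 :=
        div_le_div_of_nonneg_left (Real.exp_pos _).le (by positivity) hsinh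
    _ ≤ Real.exp (max b 0) * Real.exp (-(A / s)) / s ^ 2 := by gcongr

section Inversion

variable {A c : ℝ}

lemma hasDerivAt_const_div {s : ℝ} (hs : s ≠ 0) :
    HasDerivAt (fun s ↦ A / s) (-(A / s ^ 2)) s := by
  simpa only [div_eq_mul_inv, mul_neg] using (hasDerivAt_inv hs).const_mul A

lemma injective_const_div (hA : A ≠ 0) : Function.Injective fun s : ℝ ↦ A / s :=
  fun _ _ h ↦ inv_injective (mul_left_cancel₀ hA h)

lemma image_const_div_Ioo (hA : 0 < A) (hc : 0 < c) :
    (fun s ↦ A / s) '' Ioo 0 c = Ioi (A / c) := by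
  ext u
  constructor
  · rintro ⟨s, ⟨hs0, hsc⟩, rfl⟩
    exact div_lt_div_of_pos_left hA hs0 hsc
  · intro hu
    have hu0 : 0 < u := (div_pos hA hc).trans hu
    exact ⟨A / u, ⟨div_pos hA hu0, (div_lt_comm₀ hc hu0).mp hu⟩, div_div_cancel₀ hA.ne'⟩

lemma hasDerivWithinAt_const_div_Ioo {s : ℝ} (hs : s ∈ Ioo 0 c) :
    HasDerivWithinAt (fun s ↦ A / s) (-(A / s ^ 2)) (Ioo 0 c) s :=
  (hasDerivAt_const_div hs.1.ne').hasDerivWithinAt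

lemma abs_neg_div_sq (hA : 0 ≤ A) (s : ℝ) : |-(A / s ^ 2)| = A / s ^ 2 := by
  rw [abs_neg, abs_of_nonneg (by positivity)]

lemma integrableOn_div_sq_mul_exp_neg_div (hA : 0 < A) (hc : 0 < c) :
    IntegrableOn (fun s ↦ A / s ^ 2 * Real.exp (-(A / s))) (Ioo 0 c) := by
  have h := (integrableOn_image_iff_integrableOn_abs_deriv_smul (s := Ioo 0 c) measurableSet_Ioo
    (fun _ ↦ hasDerivWithinAt_const_div_Ioo) (injective_const_div hA.ne').injOn
    fun u ↦ Real.exp (-u)).mp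
  simp only [image_const_div_Ioo hA hc, abs_neg_div_sq hA.le, smul_eq_mul] at h
  exact h (by simpa using exp_neg_integrableOn_Ioi (A / c) one_pos)

lemma integral_div_sq_mul_exp_neg_div (hA : 0 < A) (hc : 0 < c) :
    ∫ s in Ioo 0 c, A / s ^ 2 * Real.exp (-(A / s)) = Real.exp (-(A / c)) := by
  have h := integral_image_eq_integral_abs_deriv_smul (s := Ioo 0 c) measurableSet_Ioo
    (fun _ ↦ hasDerivWithinAt_const_div_Ioo) (injective_const_div hA.ne').injOn
    fun u ↦ Real.exp (-u)
  simp only [image_const_div_Ioo hA hc, abs_neg_div_sq hA.le, smul_eq_mul,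
    integral_exp_neg_Ioi] at h
  exact h.symm

end Inversion

/-- Small-`s` part of the Laplace representation of the oscillator resolvent. -/
theorem stmt_2 (A b : ℝ) (hA : 0 < A) :
    ∫ s in Set.Ioo (0 : ℝ) 1, Real.exp (-A * coth s + b * s) / Real.sinh s
      ≤ Real.exp (max b 0) * Real.exp (-A) / A := by
  have hmajorant : ∀ s ∈ Ioo (0 : ℝ) 1, Real.exp (-A * coth s + b * s) / Real.sinh s ≤
      Real.exp (max b 0) / A * (A / s ^ 2 * Real.exp (-(A / s))) := fun s hs ↦ by
    convert exp_neg_mul_coth_add_mul_div_sinh_le hA.le (Ioo_subset_Ioc_self hs) using 1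
    field_simp
  calc ∫ s in Ioo (0 : ℝ) 1, Real.exp (-A * coth s + b * s) / Real.sinh s
      ≤ ∫ s in Ioo (0 : ℝ) 1, Real.exp (max b 0) / A * (A / s ^ 2 * Real.exp (-(A / s))) :=
        setIntegral_mono_of_nonneg
          (fun s hs ↦ div_nonneg (Real.exp_pos _).le (Real.sinh_pos_iff.mpr hs.1).le) hmajorant
          ((integrableOn_div_sq_mul_exp_neg_div hA one_pos).const_mul _)
    _ = Real.exp (max b 0) * Real.exp (-A) / A := by
        rw [integral_const_mul, integral_div_sq_mul_exp_neg_div hA one_pos, div_one]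
        ring

end
end

section
/- For every a > 0 and every c > 0, one has ∫₀^∞ exp(−a/(e^{2s} − 1) − c·s) ds ≥ (1/(e·c)) · (1 + a)^{−c/2}. -/
/-!
Once `s ≥ log (1 + a) / 2` we have `e^{2s} - 1 ≥ a`, so the integrand is at least `e^{-1 - c s}`.
Discarding the part of the integral over `(0, log (1 + a) / 2)` and integrating this exponential
gives `e^{-1} (1 + a)^{-c/2} / c`.
-/

open MeasureTheory Real Set

lemma div_exp_two_mul_sub_one_le_one {a s : ℝ} (ha : 0 < a) (hs : log (1 + a) / 2 ≤ s) :
    a / (exp (2 * s) - 1) ≤ 1 := by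
  have h : 1 + a ≤ exp (2 * s) := by
    rw [← exp_log (by linarith : 0 < 1 + a)]
    exact exp_le_exp.2 (by linarith)
  rw [div_le_one (by linarith)]
  linarith

lemma integrableOn_exp_neg_div_exp_two_mul_sub_one_sub_mul {a c : ℝ} (ha : 0 ≤ a) (hc : 0 < c) :
    IntegrableOn (fun s => exp (-a / (exp (2 * s) - 1) - c * s)) (Ioi 0) := by
  refine (integrableOn_exp_mul_Ioi (neg_lt_zero.2 hc) 0).mono' (by fun_prop) ?_
  filter_upwards [ae_restrict_mem measurableSet_Ioi] with s (hs : 0 < s)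
  have : 0 ≤ a / (exp (2 * s) - 1) :=
    div_nonneg ha (sub_nonneg.2 (one_le_exp (by linarith)))
  rw [norm_of_nonneg (exp_pos _).le, exp_le_exp, neg_div]
  linarith

lemma integral_exp_sub_mul_Ioi (b : ℝ) {c : ℝ} (hc : 0 < c) (t : ℝ) :
    ∫ s in Ioi t, exp (b - c * s) = exp (b - c * t) / c := by
  simp_rw [sub_eq_add_neg, exp_add, integral_const_mul, ← neg_mul,
    integral_exp_mul_Ioi (neg_lt_zero.2 hc)]
  field_simp

/-- Lower bound for the integral appearing in the lower bound on the
oscillator resolvent kernel. -/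
theorem stmt_4 (a c : ℝ) (ha : 0 < a) (hc : 0 < c) :
    (1 / (Real.exp 1 * c)) * (1 + a) ^ (-c / 2 : ℝ)
      ≤ ∫ s in Set.Ioi (0 : ℝ), Real.exp (-a / (Real.exp (2 * s) - 1) - c * s) := by
  set s₀ := log (1 + a) / 2 with hs₀_def
  have hs₀ : 0 ≤ s₀ := by have := log_nonneg (by linarith : 1 ≤ 1 + a); positivity
  have hint := integrableOn_exp_neg_div_exp_two_mul_sub_one_sub_mul ha.le hc
  calc (1 / (exp 1 * c)) * (1 + a) ^ (-c / 2 : ℝ)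
      = exp (-1 - c * s₀) / c := by
        rw [rpow_def_of_pos (by linarith), sub_eq_add_neg, exp_add, exp_neg, hs₀_def]
        ring_nf
    _ = ∫ s in Ioi s₀, exp (-1 - c * s) := (integral_exp_sub_mul_Ioi _ hc s₀).symm
    _ ≤ ∫ s in Ioi s₀, exp (-a / (exp (2 * s) - 1) - c * s) := by
        refine integral_mono_of_nonneg (.of_forall fun _ => (exp_pos _).le)
          (hint.mono_set (Ioi_subset_Ioi hs₀)) ?_
        filter_upwards [ae_restrict_mem measurableSet_Ioi] with s (hs : s₀ < s)
        have := div_exp_two_mul_sub_one_le_one ha hs.le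
        rw [exp_le_exp, neg_div]
        linarith
    _ ≤ ∫ s in Ioi 0, exp (-a / (exp (2 * s) - 1) - c * s) :=
        setIntegral_mono_set hint (.of_forall fun _ => (exp_pos _).le)
          (Ioi_subset_Ioi hs₀).eventuallyLE
end

section
/- Let λ > 0, a > 0, v∞ > 0, C > 0. Let v : ℝ² → ℝ be measurable with |v(x)| ≤ v∞ for all x and v(x) = 0 whenever ‖x‖ > a. Let φ : ℝ² → ℂ be measurable and satisfy |φ(y)| ≤ C·λ²·exp(−(λ/4)·dist(y, B)²) for all y ∉ B, where B := {y ∈ ℝ² : ‖y‖ ≤ a}. Then for every d ∈ ℝ² with ‖d‖ > a, ( ∫_{ℝ²} |v(x)|²·|φ(x + 2d)|² dx )^{1/2} ≤ √π · a · v∞ · C · λ² · exp(−(λ/4)(2‖d‖ − 2a)²). -/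
/-!
On the ball `B = closedBall 0 a` carrying `v`, the shifted point `x + 2d` lies at distance at
least `2‖d‖ - 2a` from `B`, so the Gaussian decay of `φ` bounds `‖φ (x + 2d)‖` there by
`C λ² exp (-(λ/4)(2‖d‖ - 2a)²)`. The integrand vanishes off `B`, so the integral is at most
`(v∞ C λ² exp (…))²` times the area `π a²` of `B`.
-/

open MeasureTheory

noncomputable section

/-- Two-dimensional Euclidean space. -/
abbrev E2 := EuclideanSpace ℝ (Fin 2)

open Metric

section Translate

variable {E F : Type*} [SeminormedAddCommGroup E] [SeminormedAddCommGroup F]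

lemma norm_sub_two_mul_le_infDist_add_closedBall {a : ℝ} (ha : 0 ≤ a) {x : E}
    (hx : ‖x‖ ≤ a) (y : E) : ‖y‖ - 2 * a ≤ infDist (x + y) (closedBall 0 a) := by
  refine (le_infDist ⟨0, mem_closedBall_self ha⟩).2 fun z hz => ?_
  have hy : ‖y‖ ≤ ‖x + y‖ + ‖x‖ := by simpa using norm_sub_le (x + y) x
  rw [mem_closedBall_zero_iff] at hz
  rw [dist_eq_norm]
  linarith [norm_sub_norm_le (x + y) z]

lemma norm_apply_add_le_of_gaussian_decay {φ : E → F} {K c a : ℝ} (hK : 0 ≤ K) (hc : 0 ≤ c)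
    (ha : 0 ≤ a) (hdecay : ∀ y ∉ closedBall (0 : E) a,
      ‖φ y‖ ≤ K * Real.exp (-c * infDist y (closedBall (0 : E) a) ^ 2))
    {x y : E} (hx : ‖x‖ ≤ a) (hy : 2 * a < ‖y‖) :
    ‖φ (x + y)‖ ≤ K * Real.exp (-c * (‖y‖ - 2 * a) ^ 2) := by
  have hout : x + y ∉ closedBall (0 : E) a := by
    have : ‖y‖ ≤ ‖x + y‖ + ‖x‖ := by simpa using norm_sub_le (x + y) x
    rw [mem_closedBall_zero_iff, not_le]
    linarith
  refine (hdecay _ hout).trans ?_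
  have hdist := norm_sub_two_mul_le_infDist_add_closedBall ha hx y
  rw [neg_mul, neg_mul]
  gcongr

end Translate

lemma volume_real_closedBall_fin_two (x : E2) {r : ℝ} (hr : 0 ≤ r) :
    volume.real (closedBall x r) = Real.pi * r ^ 2 := by
  rw [measureReal_def, EuclideanSpace.volume_closedBall_fin_two, ENNReal.toReal_mul,
    ENNReal.toReal_pow, ENNReal.toReal_ofReal hr, ENNReal.toReal_ofReal Real.pi_pos.le,
    mul_comm]

theorem stmt_14_general (lam a vinf C : ℝ) (hlam : 0 < lam) (ha : 0 < a)
    (hvinf : 0 < vinf) (hC : 0 < C)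
    (v : E2 → ℝ) (hvbd : ∀ x, |v x| ≤ vinf)
    (hvsupp : ∀ x : E2, a < ‖x‖ → v x = 0)
    (φ : E2 → ℂ)
    (hφdecay : ∀ y : E2, y ∉ Metric.closedBall (0 : E2) a →
      ‖φ y‖ ≤ C * lam ^ 2 *
        Real.exp (-(lam / 4) * (Metric.infDist y (Metric.closedBall (0 : E2) a)) ^ 2))
    (d : E2) (hd : a < ‖d‖) :
    Real.sqrt (∫ x : E2, |v x| ^ 2 * ‖φ (x + (2 : ℝ) • d)‖ ^ 2)
      ≤ Real.sqrt Real.pi * a * vinf * C * lam ^ 2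
        * Real.exp (-(lam / 4) * (2 * ‖d‖ - 2 * a) ^ 2) := by
  set M := C * lam ^ 2 * Real.exp (-(lam / 4) * (2 * ‖d‖ - 2 * a) ^ 2)
  have h2d : ‖(2 : ℝ) • d‖ = 2 * ‖d‖ := by simp [norm_smul]
  have hφB : ∀ x ∈ closedBall (0 : E2) a, ‖φ (x + (2 : ℝ) • d)‖ ≤ M := by
    intro x hx
    have := norm_apply_add_le_of_gaussian_decay (by positivity) (by positivity) ha.le
      hφdecay (mem_closedBall_zero_iff.1 hx) (y := (2 : ℝ) • d) (by linarith)
    rwa [h2d] at this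
  have hbound : ∀ x ∈ closedBall (0 : E2) a,
      ‖|v x| ^ 2 * ‖φ (x + (2 : ℝ) • d)‖ ^ 2‖ ≤ (vinf * M) ^ 2 := fun x hx => by
    rw [Real.norm_of_nonneg (by positivity), mul_pow]
    gcongr
    exacts [hvbd x, hφB x hx]
  have hvanish : ∀ x ∉ closedBall (0 : E2) a,
      |v x| ^ 2 * ‖φ (x + (2 : ℝ) • d)‖ ^ 2 = 0 := fun x hx => by
    simp [hvsupp x (by simpa using hx)]
  have hint : ∫ x : E2, |v x| ^ 2 * ‖φ (x + (2 : ℝ) • d)‖ ^ 2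
      ≤ (vinf * M) ^ 2 * (Real.pi * a ^ 2) := by
    rw [← setIntegral_eq_integral_of_forall_compl_eq_zero hvanish,
      ← volume_real_closedBall_fin_two 0 ha.le]
    exact (le_abs_self _).trans
      (norm_setIntegral_le_of_norm_le_const measure_closedBall_lt_top hbound)
  refine Real.sqrt_le_iff.2 ⟨by positivity, hint.trans_eq ?_⟩
  linear_combination -(vinf * M * a) ^ 2 * Real.sq_sqrt Real.pi_pos.le

/-- Claim 1 of the eigenvalue-splitting analysis: the `L²` norm of the
right-well potential times the left-well ground state is exponentially small in
the well separation, via the Gaussian decay of the ground state away from the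
support of its potential. -/
theorem stmt_14 (lam a vinf C : ℝ) (hlam : 0 < lam) (ha : 0 < a)
    (hvinf : 0 < vinf) (hC : 0 < C)
    (v : E2 → ℝ) (hv : Measurable v) (hvbd : ∀ x, |v x| ≤ vinf)
    (hvsupp : ∀ x : E2, a < ‖x‖ → v x = 0)
    (φ : E2 → ℂ) (hφ : Measurable φ)
    (hφdecay : ∀ y : E2, y ∉ Metric.closedBall (0 : E2) a →
      ‖φ y‖ ≤ C * lam ^ 2 *
        Real.exp (-(lam / 4) * (Metric.infDist y (Metric.closedBall (0 : E2) a)) ^ 2))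
    (d : E2) (hd : a < ‖d‖) :
    Real.sqrt (∫ x : E2, |v x| ^ 2 * ‖φ (x + (2 : ℝ) • d)‖ ^ 2)
      ≤ Real.sqrt Real.pi * a * vinf * C * lam ^ 2
        * Real.exp (-(lam / 4) * (2 * ‖d‖ - 2 * a) ^ 2) :=
  stmt_14_general lam a vinf C hlam ha hvinf hC v hvbd hvsupp φ hφdecay d hd

end
end
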